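/- arXiv:1002.1192 — 2 statements merged into one kernel-verified Lean document; each statement's English description precedes it below -/
import Mathlib

section
/- Let Γ and Σ be connected simple graphs on m and n vertices respectively, with m ≤ n and with the same Euler characteristic χ = (number of vertices) − (number of edges). Then there is a finite sequence of operations, each operation being either an edge slide, or deletion of a vertex of degree 1 together with its incident edge, or the removal of a vertex y of degree 2 whose two neighbors x and z are distinct and non-adjacent together with its two incident edges followed by the addition of the edge zx, which transforms Σ into a graph isomorphic to Γ. -/
/-!
Edge slides are reversible and preserve both connectedness and the number of edges. Sliding
edges towards a fixed vertex `v₀` makes `v₀` universal, and in a graph where `v₀` is universal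
any edge avoiding `v₀` can be traded for any non-edge avoiding `v₀` by a few slides, each
endpoint being pivoted through `v₀`. Hence two connected graphs on the same vertex set with the
same number of edges are related by slides. Since `Σ` has exactly `n - m` more edges than `Γ`,
it slides to `Γ` with `n - m` pendant vertices attached, and deleting these leaves one at a
time returns `Γ`.
-/

/-- An edge slide: given distinct vertices `x, y, z` with `x ~ y`, `y ~ z` and `x ≁ z`,
slide the edge `xy` to `xz`. -/
def EdgeSlide {V : Type*} (G G' : SimpleGraph V) : Prop :=
  ∃ x y z : V, x ≠ z ∧ G.Adj x y ∧ G.Adj y z ∧ ¬ G.Adj x z ∧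
    G' = G.deleteEdges {s(x, y)} ⊔ SimpleGraph.fromEdgeSet {s(x, z)}

/-- One step of the collapsing process on a graph with a finite vertex set: either an edge
slide, or deletion of a vertex of degree `1` together with its incident edge (move (iii)),
or removal of a vertex `y` of degree `2` whose two neighbours `x ≠ z` are non-adjacent,
together with its two incident edges, followed by the addition of the edge `zx`
(move (iv)). -/
def CollapseOrSlideStep (p q : Σ k : ℕ, SimpleGraph (Fin k)) : Prop :=
  (∃ G' : SimpleGraph (Fin p.1), EdgeSlide p.2 G' ∧ q = ⟨p.1, G'⟩) ∨
  (∃ (y : Fin p.1) (H : SimpleGraph (Fin (p.1 - 1))),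
    (p.2.neighborSet y).ncard = 1 ∧
    Nonempty (H ≃g p.2.induce {v | v ≠ y}) ∧ q = ⟨p.1 - 1, H⟩) ∨
  (∃ (y x z : Fin p.1) (H : SimpleGraph (Fin (p.1 - 1))),
    x ≠ z ∧ p.2.Adj x y ∧ p.2.Adj z y ∧ ¬ p.2.Adj x z ∧
    p.2.neighborSet y = {x, z} ∧
    Nonempty (H ≃g (p.2 ⊔ SimpleGraph.fromEdgeSet {s(x, z)}).induce {v | v ≠ y}) ∧
    q = ⟨p.1 - 1, H⟩)


open Relation SimpleGraph

namespace SimpleGraph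

variable {V : Type*} {G : SimpleGraph V}

def replaceEdge (G : SimpleGraph V) (e f : Sym2 V) : SimpleGraph V :=
  G.deleteEdges {e} ⊔ fromEdgeSet {f}

section replaceEdge

variable {e f g : Sym2 V}

theorem edgeSet_replaceEdge (hf : ¬ f.IsDiag) :
    (G.replaceEdge e f).edgeSet = insert f (G.edgeSet \ {e}) := by
  ext t
  simp only [replaceEdge, edgeSet_sup, edgeSet_deleteEdges, edgeSet_fromEdgeSet, Set.mem_union,
    Set.mem_sdiff, Set.mem_insert_iff, Set.mem_singleton_iff, Sym2.mem_diagSet]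
  grind

theorem replaceEdge_replaceEdge (hf : ¬ f.IsDiag) (hg : ¬ g.IsDiag) (hfG : f ∉ G.edgeSet) :
    (G.replaceEdge e f).replaceEdge f g = G.replaceEdge e g := by
  rw [← edgeSet_inj, edgeSet_replaceEdge hg, edgeSet_replaceEdge hf, edgeSet_replaceEdge hg,
    Set.insert_sdiff_self_of_notMem (fun h => hfG h.1)]

theorem replaceEdge_self (he : e ∈ G.edgeSet) : G.replaceEdge e e = G := by
  rw [← edgeSet_inj, edgeSet_replaceEdge (G.not_isDiag_of_mem_edgeSet he),
    Set.insert_sdiff_singleton, Set.insert_eq_of_mem he]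

theorem replaceEdge_comm (hf : ¬ f.IsDiag) {e' f' : Sym2 V} (hf' : ¬ f'.IsDiag)
    (hef' : e ≠ f') (he'f : e' ≠ f) :
    (G.replaceEdge e f).replaceEdge e' f' = (G.replaceEdge e' f').replaceEdge e f := by
  rw [← edgeSet_inj, edgeSet_replaceEdge hf, edgeSet_replaceEdge hf', edgeSet_replaceEdge hf,
    edgeSet_replaceEdge hf']
  ext t
  simp only [Set.mem_insert_iff, Set.mem_sdiff, Set.mem_singleton_iff]
  grind

theorem replaceEdge_replaceEdge_of_mem (hf : ¬ f.IsDiag) (hgG : g ∈ G.edgeSet) (hef : e ≠ f)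
    (heg : e ≠ g) : (G.replaceEdge g f).replaceEdge e g = G.replaceEdge e f := by
  rw [← edgeSet_inj, edgeSet_replaceEdge (G.not_isDiag_of_mem_edgeSet hgG),
    edgeSet_replaceEdge hf, edgeSet_replaceEdge hf]
  ext t
  simp only [Set.mem_insert_iff, Set.mem_sdiff, Set.mem_singleton_iff]
  grind

theorem replaceEdge_adj {a b c d : V} (hcd : c ≠ d) :
    (G.replaceEdge e s(c, d)).Adj a b ↔ s(a, b) = s(c, d) ∨ (G.Adj a b ∧ s(a, b) ≠ e) := by
  rw [← mem_edgeSet, edgeSet_replaceEdge (by simpa using hcd)]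
  simp

end replaceEdge

end SimpleGraph

section

variable {V : Type*} {G H : SimpleGraph V}

theorem edgeSlide_replaceEdge {x y z : V} (hxz : x ≠ z) (hxy : G.Adj x y) (hyz : G.Adj y z)
    (hnxz : ¬ G.Adj x z) : EdgeSlide G (G.replaceEdge s(x, y) s(x, z)) :=
  ⟨x, y, z, hxz, hxy, hyz, hnxz, rfl⟩

theorem EdgeSlide.symm (h : EdgeSlide G H) : EdgeSlide H G := by
  obtain ⟨x, y, z, hxz, hxy, hyz, hnxz, rfl⟩ := h
  have hback : (G.replaceEdge s(x, y) s(x, z)).replaceEdge s(x, z) s(x, y) = G := by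
    rw [replaceEdge_replaceEdge (by simpa using hxz) (by simpa using hxy.ne) hnxz,
      replaceEdge_self hxy]
  have hslide := edgeSlide_replaceEdge (G := G.replaceEdge s(x, y) s(x, z)) (y := z) hxy.ne
    (by simp [replaceEdge_adj hxz]) (by grind [replaceEdge_adj hxz, Sym2.eq_iff, Adj.symm])
    (by grind [replaceEdge_adj hxz, Sym2.eq_iff])
  rwa [hback] at hslide

theorem EdgeSlide.connected (h : EdgeSlide G H) (hG : G.Connected) : H.Connected := by
  obtain ⟨x, y, z, hxz, hxy, hyz, hnxz, rfl⟩ := h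
  have hxz' : (G.replaceEdge s(x, y) s(x, z)).Adj x z := by simp [replaceEdge_adj hxz]
  have hzy : (G.replaceEdge s(x, y) s(x, z)).Adj z y := by
    grind [replaceEdge_adj hxz, Sym2.eq_iff, Adj.symm]
  have hedge : G.Adj ≤ (G.replaceEdge s(x, y) s(x, z)).Reachable := by
    intro a b hab
    by_cases hab' : s(a, b) = s(x, y)
    · rcases Sym2.eq_iff.1 hab' with ⟨rfl, rfl⟩ | ⟨rfl, rfl⟩
      · exact hxz'.reachable.trans hzy.reachable
      · exact (hxz'.reachable.trans hzy.reachable).symm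
    · exact ((replaceEdge_adj hxz).2 (Or.inr ⟨hab, hab'⟩)).reachable
  have := hG.nonempty
  refine ⟨fun u v => ?_⟩
  rw [reachable_eq_reflTransGen] at hedge ⊢
  exact reflTransGen_closed hedge u v (reachable_eq_reflTransGen ▸ hG u v)

theorem EdgeSlide.ncard_edgeSet (h : EdgeSlide G H) : H.edgeSet.ncard = G.edgeSet.ncard := by
  obtain ⟨x, y, z, hxz, hxy, hyz, hnxz, rfl⟩ := h
  change (G.replaceEdge s(x, y) s(x, z)).edgeSet.ncard = _
  rw [edgeSet_replaceEdge (by simpa using hxz)]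
  exact Set.ncard_exchange hnxz hxy

theorem reflTransGen_edgeSlide_symm (h : ReflTransGen EdgeSlide G H) :
    ReflTransGen EdgeSlide H G := by
  induction h with
  | refl => rfl
  | tail _ hs ih => exact ih.head hs.symm

theorem ncard_edgeSet_of_reflTransGen_edgeSlide (h : ReflTransGen EdgeSlide G H) :
    H.edgeSet.ncard = G.edgeSet.ncard := by
  induction h with
  | refl => rfl
  | tail _ hs ih => exact hs.ncard_edgeSet.trans ih

end

namespace SimpleGraph

section universal

variable {V : Type*} {G H : SimpleGraph V}

theorem Connected.exists_reflTransGen_edgeSlide_isUniversal [Finite V] (hG : G.Connected)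
    (v₀ : V) : ∃ G', ReflTransGen EdgeSlide G G' ∧ G'.IsUniversal v₀ := by
  induction hk : (insert v₀ (G.neighborSet v₀))ᶜ.ncard using Nat.strong_induction_on
    generalizing G with
  | _ k ih =>
  by_cases hu : G.IsUniversal v₀
  · exact ⟨G, .refl, hu⟩
  obtain ⟨w, hw⟩ : ∃ w, w ∉ insert v₀ (G.neighborSet v₀) := by
    by_contra! h
    exact hu (insert_neighborSet_eq_univ.1 (Set.eq_univ_of_forall h))
  obtain ⟨p⟩ := hG.preconnected v₀ w
  obtain ⟨⟨⟨a, b⟩, hab⟩, -, ha, hb⟩ := p.exists_boundary_dart _ (Set.mem_insert _ _) hw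
  simp only [Set.mem_insert_iff, mem_neighborSet, not_or] at ha hb
  obtain ⟨hbv₀, hnb⟩ := hb
  have hav₀ : G.Adj v₀ a := ha.resolve_left (by rintro rfl; exact hnb hab)
  -- Sliding `ba` to `bv₀` adds `b` to the closed neighbourhood of `v₀`.
  have hslide := edgeSlide_replaceEdge hbv₀ hab.symm hav₀.symm (mt Adj.symm hnb)
  have hnbhd : insert v₀ ((G.replaceEdge s(b, a) s(b, v₀)).neighborSet v₀) =
      insert b (insert v₀ (G.neighborSet v₀)) := by
    ext t
    simp only [Set.mem_insert_iff, mem_neighborSet, replaceEdge_adj hbv₀, Sym2.eq_iff]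
    grind
  have hlt : (insert v₀ ((G.replaceEdge s(b, a) s(b, v₀)).neighborSet v₀))ᶜ.ncard < k := by
    rw [← hk, hnbhd, Set.insert_eq, Set.compl_union, ← Set.sdiff_eq_compl_inter]
    exact Set.ncard_sdiff_singleton_lt_of_mem (by simp [hbv₀, hnb])
  obtain ⟨G', hG', hu'⟩ := ih _ hlt (hslide.connected hG) rfl
  exact ⟨G', hG'.head hslide, hu'⟩

variable {v₀ : V} {e f : Sym2 V}

theorem IsUniversal.replaceEdge (h : G.IsUniversal v₀) (hv₀e : v₀ ∉ e) (hf : ¬ f.IsDiag) :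
    (G.replaceEdge e f).IsUniversal v₀ := by
  intro w hw
  rw [← mem_edgeSet, edgeSet_replaceEdge hf]
  exact Or.inr ⟨h hw, fun h => hv₀e (h ▸ Sym2.mem_mk_left v₀ w)⟩

theorem IsUniversal.mem_edgeSet (h : G.IsUniversal v₀) (hv₀e : v₀ ∈ e) (he : ¬ e.IsDiag) :
    e ∈ G.edgeSet := by
  obtain ⟨w, rfl⟩ := Sym2.mem_iff_exists.1 hv₀e
  exact h (by simpa using he)

theorem IsUniversal.reflTransGen_edgeSlide_pivot {u v w : V} (h : G.IsUniversal v₀)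
    (hu : u ≠ v₀) (hv : v ≠ v₀) (hw : w ≠ v₀) (huv : G.Adj u v) (huw : u ≠ w)
    (hnuw : ¬ G.Adj u w) : ReflTransGen EdgeSlide G (G.replaceEdge s(u, v) s(u, w)) := by
  by_cases hvw : G.Adj v w
  · exact .single (edgeSlide_replaceEdge huw huv hvw hnuw)
  have hvw' : v ≠ w := by rintro rfl; exact hnuw huv
  have huv' := huv.ne
  -- Route through `v₀`: slide `wv₀` to `wv`, then `uv` to `uw` along `vw`, then undo the first.
  set G₁ := G.replaceEdge s(w, v₀) s(w, v)
  have h₁ : EdgeSlide G G₁ :=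
    edgeSlide_replaceEdge hvw'.symm (h hw.symm).symm (h hv.symm) (mt Adj.symm hvw)
  have h₂ : EdgeSlide G₁ (G₁.replaceEdge s(u, v) s(u, w)) := by
    apply edgeSlide_replaceEdge huw <;> grind [replaceEdge_adj hvw'.symm, Sym2.eq_iff]
  set G' := G.replaceEdge s(u, v) s(u, w)
  have h₃ : EdgeSlide G' (G'.replaceEdge s(w, v₀) s(w, v)) := by
    apply edgeSlide_replaceEdge hvw'.symm <;>
      grind [replaceEdge_adj huw, Sym2.eq_iff, h hv.symm, (h hw.symm).symm, mt Adj.symm hvw]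
  have hcomm : G₁.replaceEdge s(u, v) s(u, w) = G'.replaceEdge s(w, v₀) s(w, v) :=
    replaceEdge_comm (by simpa using hvw'.symm) (by simpa using huw) (by grind [Sym2.eq_iff])
      (by grind [Sym2.eq_iff])
  exact (ReflTransGen.single h₁).tail (hcomm ▸ h₂) |>.tail h₃.symm

theorem IsUniversal.reflTransGen_edgeSlide_replaceEdge_of_mem_of_mem (h : G.IsUniversal v₀)
    (he : e ∈ G.edgeSet) (hf : f ∉ G.edgeSet) (hfd : ¬ f.IsDiag) (hv₀e : v₀ ∉ e)
    (hv₀f : v₀ ∉ f) {u : V} (hue : u ∈ e) (huf : u ∈ f) :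
    ReflTransGen EdgeSlide G (G.replaceEdge e f) := by
  obtain ⟨v, rfl⟩ := Sym2.mem_iff_exists.1 hue
  obtain ⟨w, rfl⟩ := Sym2.mem_iff_exists.1 huf
  simp only [Sym2.mem_iff, not_or, Sym2.mk_isDiag_iff] at hv₀e hv₀f hfd
  exact h.reflTransGen_edgeSlide_pivot (Ne.symm hv₀e.1) (Ne.symm hv₀e.2) (Ne.symm hv₀f.2) he
    hfd hf

theorem IsUniversal.reflTransGen_edgeSlide_replaceEdge (h : G.IsUniversal v₀)
    (he : e ∈ G.edgeSet) (hf : f ∉ G.edgeSet) (hfd : ¬ f.IsDiag) (hv₀e : v₀ ∉ e)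
    (hv₀f : v₀ ∉ f) : ReflTransGen EdgeSlide G (G.replaceEdge e f) := by
  by_cases hshare : ∃ u, u ∈ e ∧ u ∈ f
  · obtain ⟨u, hue, huf⟩ := hshare
    exact h.reflTransGen_edgeSlide_replaceEdge_of_mem_of_mem he hf hfd hv₀e hv₀f hue huf
  push Not at hshare
  induction e using Sym2.ind with | _ u v => ?_
  induction f using Sym2.ind with | _ x y => ?_
  -- Exchange through the edge `uy`, which meets both `uv` and `xy`.
  have huy : u ≠ y := fun huy => hshare u (Sym2.mem_mk_left u v) (huy ▸ Sym2.mem_mk_right x y)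
  have hvy : v ≠ y := fun hvy => hshare v (Sym2.mem_mk_right u v) (hvy ▸ Sym2.mem_mk_right x y)
  have hgd : ¬ s(u, y).IsDiag := by simpa using huy
  have hv₀g : v₀ ∉ s(u, y) := by simp_all
  have heg : s(u, v) ≠ s(u, y) := by simp [hvy, huy]
  have hgf : s(u, y) ≠ s(x, y) := by simp_all
  have hef : s(u, v) ≠ s(x, y) := fun hef => hf (hef ▸ he)
  by_cases hg : s(u, y) ∈ G.edgeSet
  · have h₁ := h.reflTransGen_edgeSlide_replaceEdge_of_mem_of_mem hg hf hfd hv₀g hv₀f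
      (Sym2.mem_mk_right u y) (Sym2.mem_mk_right x y)
    have h₂ := (h.replaceEdge hv₀g hfd).reflTransGen_edgeSlide_replaceEdge_of_mem_of_mem
      (by simp [edgeSet_replaceEdge hfd, he, hef, heg]) (by simp [edgeSet_replaceEdge hfd, hgf])
      hgd hv₀e hv₀g (Sym2.mem_mk_left u v) (Sym2.mem_mk_left u y)
    rw [replaceEdge_replaceEdge_of_mem hfd hg hef heg] at h₂
    exact h₁.trans h₂
  · have h₁ := h.reflTransGen_edgeSlide_replaceEdge_of_mem_of_mem he hg hgd hv₀e hv₀g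
      (Sym2.mem_mk_left u v) (Sym2.mem_mk_left u y)
    have h₂ := (h.replaceEdge hv₀e hgd).reflTransGen_edgeSlide_replaceEdge_of_mem_of_mem
      (by simp [edgeSet_replaceEdge hgd]) (by simp [edgeSet_replaceEdge hgd, hgf.symm, hf])
      hfd hv₀g hv₀f (Sym2.mem_mk_right u y) (Sym2.mem_mk_right x y)
    rw [replaceEdge_replaceEdge hgd hfd hg] at h₂
    exact h₁.trans h₂

theorem IsUniversal.reflTransGen_edgeSlide [Finite V] (hG : G.IsUniversal v₀)
    (hH : H.IsUniversal v₀) (hcard : G.edgeSet.ncard = H.edgeSet.ncard) :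
    ReflTransGen EdgeSlide G H := by
  induction hk : (G.edgeSet \ H.edgeSet).ncard generalizing G with
  | zero =>
    have hsub : G.edgeSet ⊆ H.edgeSet :=
      Set.sdiff_eq_empty.1 ((Set.ncard_eq_zero (Set.toFinite _)).1 hk)
    rw [edgeSet_inj.1 (Set.eq_of_subset_of_ncard_le hsub hcard.ge)]
  | succ k ih =>
    have hsymm : (G.edgeSet \ H.edgeSet).ncard = (H.edgeSet \ G.edgeSet).ncard :=
      (Set.ncard_eq_ncard_iff_ncard_sdiff_eq_ncard_sdiff (Set.toFinite _) (Set.toFinite _)).1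
        hcard
    obtain ⟨e, he⟩ := Set.nonempty_of_ncard_ne_zero (s := G.edgeSet \ H.edgeSet) (by omega)
    obtain ⟨f, hf⟩ := Set.nonempty_of_ncard_ne_zero (s := H.edgeSet \ G.edgeSet) (by omega)
    have hfd := H.not_isDiag_of_mem_edgeSet hf.1
    have hv₀e : v₀ ∉ e := fun hv₀ =>
      he.2 (hH.mem_edgeSet hv₀ (G.not_isDiag_of_mem_edgeSet he.1))
    have hv₀f : v₀ ∉ f := fun hv₀ => hf.2 (hG.mem_edgeSet hv₀ hfd)
    refine (hG.reflTransGen_edgeSlide_replaceEdge he.1 hf.2 hfd hv₀e hv₀f).trans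
      (ih (hG.replaceEdge hv₀e hfd) ?_ ?_)
    · rw [edgeSet_replaceEdge hfd, Set.ncard_exchange hf.2 he.1, hcard]
    · rw [edgeSet_replaceEdge hfd, Set.insert_sdiff_of_mem _ hf.1, sdiff_right_comm,
        Set.ncard_sdiff_singleton_of_mem he, hk, Nat.add_sub_cancel]

theorem Connected.reflTransGen_edgeSlide [Finite V] (hG : G.Connected) (hH : H.Connected)
    (hcard : G.edgeSet.ncard = H.edgeSet.ncard) : ReflTransGen EdgeSlide G H := by
  obtain ⟨v₀⟩ := hG.nonempty
  obtain ⟨G', hGG', hG'⟩ := hG.exists_reflTransGen_edgeSlide_isUniversal v₀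
  obtain ⟨H', hHH', hH'⟩ := hH.exists_reflTransGen_edgeSlide_isUniversal v₀
  have hcard' : G'.edgeSet.ncard = H'.edgeSet.ncard := by
    rw [ncard_edgeSet_of_reflTransGen_edgeSlide hGG',
      ncard_edgeSet_of_reflTransGen_edgeSlide hHH', hcard]
  exact hGG'.trans ((hG'.reflTransGen_edgeSlide hH' hcard').trans
    (reflTransGen_edgeSlide_symm hHH'))

end universal

section addLeaf

variable {n : ℕ}

def addLeaf (G : SimpleGraph (Fin n)) (a : Fin n) : SimpleGraph (Fin (n + 1)) :=
  G.map Fin.castSuccEmb ⊔ edge a.castSucc (Fin.last n)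

variable {G : SimpleGraph (Fin n)} {a : Fin n}

theorem addLeaf_adj_castSucc {i j : Fin n} :
    (G.addLeaf a).Adj i.castSucc j.castSucc ↔ G.Adj i j := by
  rw [addLeaf, sup_adj, ← Fin.coe_castSuccEmb, map_adj_apply]
  simp [edge_adj]

theorem addLeaf_adj_last {v : Fin (n + 1)} :
    (G.addLeaf a).Adj (Fin.last n) v ↔ v = a.castSucc := by
  have hmap : ¬ (G.map Fin.castSuccEmb).Adj (Fin.last n) v := by
    rintro ⟨-, u, w, -, hu, -⟩
    exact Fin.castSucc_ne_last u hu
  have := Fin.castSucc_ne_last a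
  rw [addLeaf, sup_adj, edge_adj]
  grind

def embeddingAddLeaf (G : SimpleGraph (Fin n)) (a : Fin n) : G ↪g G.addLeaf a :=
  ⟨Fin.castSuccEmb, addLeaf_adj_castSucc⟩

theorem neighborSet_addLeaf_last : (G.addLeaf a).neighborSet (Fin.last n) = {a.castSucc} :=
  Set.ext fun _ => addLeaf_adj_last

theorem ncard_edgeSet_addLeaf : (G.addLeaf a).edgeSet.ncard = G.edgeSet.ncard + 1 := by
  have hnew : s(a.castSucc, Fin.last n) ∉ Fin.castSuccEmb.sym2Map '' G.edgeSet := by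
    rintro ⟨e, -, he⟩
    have hlast : Fin.last n ∈ Fin.castSuccEmb.sym2Map e := he ▸ Sym2.mem_mk_right _ _
    obtain ⟨u, -, hu⟩ := Sym2.mem_map.1 hlast
    exact Fin.castSucc_ne_last u hu
  rw [addLeaf, edgeSet_sup, edgeSet_map, edgeSet_edge_of_ne (Fin.castSucc_ne_last a),
    Set.union_singleton, Set.ncard_insert_of_notMem hnew,
    Set.ncard_image_of_injective _ Fin.castSuccEmb.sym2Map.injective]

theorem Connected.addLeaf (hG : G.Connected) : (G.addLeaf a).Connected := by
  refine (connected_iff_exists_forall_reachable _).2 ⟨a.castSucc, Fin.lastCases ?_ fun i => ?_⟩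
  · exact (addLeaf_adj_last.2 rfl).reachable.symm
  · exact (hG a i).map (G.embeddingAddLeaf a).toHom

theorem collapseOrSlideStep_addLeaf : CollapseOrSlideStep ⟨n + 1, G.addLeaf a⟩ ⟨n, G⟩ := by
  have hrange : Set.range Fin.castSuccEmb = {v : Fin (n + 1) | v ≠ Fin.last n} :=
    Set.ext fun _ => Fin.exists_castSucc_eq
  refine Or.inr (Or.inl ⟨Fin.last n, G, ?_, ?_, rfl⟩)
  · rw [neighborSet_addLeaf_last, Set.ncard_singleton]
  · exact ⟨hrange ▸ (G.embeddingAddLeaf a).isoInduceRange⟩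

end addLeaf

section addLeaves

variable {m : ℕ} {G : SimpleGraph (Fin m)}

def addLeaves (G : SimpleGraph (Fin m)) (r : Fin m) : (k : ℕ) → SimpleGraph (Fin (m + k))
  | 0 => G
  | k + 1 => (G.addLeaves r k).addLeaf (Fin.castAdd k r)

theorem Connected.addLeaves (hG : G.Connected) (r : Fin m) (k : ℕ) :
    (G.addLeaves r k).Connected := by
  induction k with
  | zero => exact hG
  | succ k ih => exact Connected.addLeaf (a := Fin.castAdd k r) ih

theorem ncard_edgeSet_addLeaves (r : Fin m) (k : ℕ) :
    (G.addLeaves r k).edgeSet.ncard = G.edgeSet.ncard + k := by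
  induction k with
  | zero => rfl
  | succ k ih => rw [addLeaves, ncard_edgeSet_addLeaf, ih, add_assoc]

theorem reflTransGen_collapseOrSlideStep_addLeaves (r : Fin m) (k : ℕ) :
    ReflTransGen CollapseOrSlideStep ⟨m + k, G.addLeaves r k⟩ ⟨m, G⟩ := by
  induction k with
  | zero => rfl
  | succ k ih => exact ih.head (collapseOrSlideStep_addLeaf (a := Fin.castAdd k r))

end addLeaves

end SimpleGraph

theorem reflTransGen_collapseOrSlideStep_of_edgeSlide {n : ℕ} {S T : SimpleGraph (Fin n)}
    (h : ReflTransGen EdgeSlide S T) : ReflTransGen CollapseOrSlideStep ⟨n, S⟩ ⟨n, T⟩ :=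
  ReflTransGen.lift (p := CollapseOrSlideStep) (fun T => ⟨n, T⟩)
    (fun _ _ hs => Or.inl ⟨_, hs, rfl⟩) _ _ h

/-- A connected graph `S` on `n` vertices can be collapsed, by a finite sequence of edge
slides and collapsing moves, to a graph isomorphic to any given connected graph `G` on
`m ≤ n` vertices with the same Euler characteristic. -/
theorem collapse_and_slide (m n : ℕ) (hmn : m ≤ n)
    (G : SimpleGraph (Fin m)) (S : SimpleGraph (Fin n))
    (hG : G.Connected) (hS : S.Connected)
    (hχ : (m : ℤ) - Nat.card G.edgeSet = (n : ℤ) - Nat.card S.edgeSet) :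
    ∃ G' : SimpleGraph (Fin m),
      Relation.ReflTransGen CollapseOrSlideStep ⟨n, S⟩ ⟨m, G'⟩ ∧ Nonempty (G' ≃g G) := by
  obtain ⟨k, rfl⟩ := Nat.exists_eq_add_of_le hmn
  obtain ⟨r⟩ := hG.nonempty
  have hcard : S.edgeSet.ncard = (G.addLeaves r k).edgeSet.ncard := by
    rw [ncard_edgeSet_addLeaves, ← Nat.card_coe_set_eq, ← Nat.card_coe_set_eq]
    push_cast at hχ
    omega
  have hslides := hS.reflTransGen_edgeSlide (hG.addLeaves r k) hcard
  exact ⟨G, (reflTransGen_collapseOrSlideStep_of_edgeSlide hslides).trans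
    (reflTransGen_collapseOrSlideStep_addLeaves r k), ⟨Iso.refl⟩⟩
end

section
/- Let Σ be a connected simple graph on n ≥ 2 vertices with f edges, where f ≤ (n − 1)(n − 2)/2 + 1, and let x be any vertex of Σ. Then there exists a finite sequence of edge slides transforming Σ into a connected graph in which x has degree 1; moreover, deleting x and its single incident edge from the resulting graph yields a connected graph on n − 1 vertices. -/
open Relation

namespace SimpleGraph

variable {V : Type*} {G G' : SimpleGraph V} {x y z p q : V}

lemma Connected.of_adj_imp_reachable (hG : G.Connected)
    (h : ∀ ⦃p q⦄, G.Adj p q → G'.Reachable p q) : G'.Connected :=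
  haveI := hG.nonempty
  ⟨fun p q => by
    obtain ⟨w⟩ := hG.preconnected p q
    induction w with
    | nil => rfl
    | cons hadj _ ih => exact (h hadj).trans ih⟩

def slideEdge (G : SimpleGraph V) (x y z : V) : SimpleGraph V :=
  G.deleteEdges {s(x, y)} ⊔ fromEdgeSet {s(x, z)}

lemma slideEdge_adj : (G.slideEdge x y z).Adj p q ↔
    (G.Adj p q ∧ s(p, q) ≠ s(x, y)) ∨ (s(p, q) = s(x, z) ∧ p ≠ q) := by
  simp [slideEdge]

lemma slideEdge_adj_of_ne (hp : p ≠ x) (hq : q ≠ x) :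
    (G.slideEdge x y z).Adj p q ↔ G.Adj p q := by
  simp only [slideEdge_adj, Sym2.eq_iff]
  grind

lemma edgeSlide_slideEdge (hxz : x ≠ z) (hxy : G.Adj x y) (hyz : G.Adj y z)
    (hnxz : ¬G.Adj x z) : EdgeSlide G (G.slideEdge x y z) :=
  ⟨x, y, z, hxz, hxy, hyz, hnxz, rfl⟩

lemma neighborSet_slideEdge_self (hxy : G.Adj x y) (hxz : x ≠ z) :
    (G.slideEdge x y z).neighborSet x = insert z (G.neighborSet x \ {y}) := by
  ext v
  simp only [mem_neighborSet, slideEdge_adj, Sym2.eq_iff, Set.mem_insert_iff, Set.mem_sdiff,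
    Set.mem_singleton_iff]
  have := hxy.ne
  grind

lemma neighborSet_slideEdge_of_ne (hxy : x ≠ y) (hxz : x ≠ z) :
    (G.slideEdge y x z).neighborSet x = G.neighborSet x \ {y} := by
  ext v
  simp only [mem_neighborSet, slideEdge_adj, Sym2.eq_iff, Set.mem_sdiff, Set.mem_singleton_iff]
  grind

lemma edgeSet_slideEdge (hxz : x ≠ z) :
    (G.slideEdge x y z).edgeSet = insert s(x, z) (G.edgeSet \ {s(x, y)}) := by
  rw [slideEdge, edgeSet_sup, edgeSet_deleteEdges, edgeSet_fromEdgeSet, Set.union_comm,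
    Set.insert_eq]
  congr
  simpa using hxz

lemma connected_slideEdge (hG : G.Connected) (hxz : x ≠ z) (hxy : G.Adj x y)
    (hyz : G.Adj y z) : (G.slideEdge x y z).Connected := by
  have hxz' : (G.slideEdge x y z).Adj x z := slideEdge_adj.2 (Or.inr ⟨rfl, hxz⟩)
  have hzy' : (G.slideEdge x y z).Adj z y := by
    refine slideEdge_adj.2 (Or.inl ⟨hyz.symm, ?_⟩)
    have := hxy.ne
    simp only [ne_eq, Sym2.eq_iff]
    grind
  refine hG.of_adj_imp_reachable fun p q hpq => ?_
  by_cases hpq' : s(p, q) = s(x, y)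
  · rcases Sym2.eq_iff.1 hpq' with ⟨rfl, rfl⟩ | ⟨rfl, rfl⟩
    · exact hxz'.reachable.trans hzy'.reachable
    · exact (hxz'.reachable.trans hzy'.reachable).symm
  · exact (slideEdge_adj.2 (Or.inl ⟨hpq, hpq'⟩)).reachable

end SimpleGraph

open SimpleGraph

namespace EdgeSlide

variable {V : Type*} {G G' : SimpleGraph V}

lemma encard_edgeSet (h : EdgeSlide G G') : G'.edgeSet.encard = G.edgeSet.encard := by
  obtain ⟨x, y, z, hxz, hxy, -, hnxz, rfl⟩ := h
  rw [← slideEdge, edgeSet_slideEdge hxz, Set.encard_insert_of_notMem (by simp [hnxz]),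
    Set.encard_sdiff_singleton_add_one (by simpa using hxy)]

lemma connected_s16 (h : EdgeSlide G G') (hG : G.Connected) : G'.Connected := by
  obtain ⟨x, y, z, hxz, hxy, hyz, -, rfl⟩ := h
  exact connected_slideEdge hG hxz hxy hyz

lemma natCard_edgeSet_of_reflTransGen (h : ReflTransGen EdgeSlide G G') :
    Nat.card G'.edgeSet = Nat.card G.edgeSet := by
  induction h with
  | refl => rfl
  | tail _ h ih => exact (congrArg ENat.toNat h.encard_edgeSet).trans ih

lemma connected_of_reflTransGen (h : ReflTransGen EdgeSlide G G') (hG : G.Connected) :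
    G'.Connected := by
  induction h with
  | refl => exact hG
  | tail _ h ih => exact h.connected_s16 ih

end EdgeSlide

namespace SimpleGraph

variable {V : Type*} {G : SimpleGraph V} {x y z v : V}

lemma exists_maximal_isClique_superset [Finite V] {T : Set V} (hT : G.IsClique T)
    (hxT : x ∉ T) :
    ∃ S, T ⊆ S ∧ G.IsClique S ∧ x ∉ S ∧ ∀ u ∉ S, u ≠ x → ∃ s ∈ S, s ≠ u ∧ ¬G.Adj u s := by
  obtain ⟨S, hTS, ⟨hS, hxS⟩, hmax⟩ :=
    Finite.exists_le_maximal (p := fun S : Set V => G.IsClique S ∧ x ∉ S) ⟨hT, hxT⟩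
  refine ⟨S, hTS, hS, hxS, fun u huS hux => ?_⟩
  by_contra! hall
  have hinsert : G.IsClique (insert u S) :=
    isClique_insert.2 ⟨hS, fun s hs hus => hall s hs hus.symm⟩
  exact huS <|
    hmax ⟨hinsert, by simp [hux.symm, hxS]⟩ (Set.subset_insert u S) (Set.mem_insert u S)

lemma Connected.exists_adj_of_neighborSet_subset (hc : G.Connected) {S : Set V}
    (hNS : G.neighborSet x ⊆ S) (hvS : v ∉ S) (hvx : v ≠ x) :
    ∃ s ∈ S, ∃ u ∉ S, u ≠ x ∧ G.Adj s u := by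
  obtain ⟨w⟩ := hc.preconnected x v
  obtain ⟨d, -, hd₁, hd₂⟩ := w.exists_boundary_dart (insert x S) (Set.mem_insert x S)
    (by simp [hvS, hvx])
  simp only [Set.mem_insert_iff, not_or] at hd₁ hd₂
  rcases hd₁ with hd₁ | hd₁
  · exact absurd (hNS (hd₁ ▸ d.adj)) hd₂.2
  · exact ⟨d.fst, hd₁, d.snd, hd₂.2, hd₂.1, d.adj⟩

lemma IsClique.choose_two_add_ncard_neighborSet_le [Fintype V] (h : G.IsClique {x}ᶜ) :
    (Fintype.card V - 1).choose 2 + (G.neighborSet x).ncard ≤ Nat.card G.edgeSet := by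
  classical
  have htop : G.induce {x}ᶜ = ⊤ := by
    ext a b
    exact ⟨fun hab => hab.ne, fun hab => h a.2 b.2 (Subtype.coe_ne_coe.2 hab)⟩
  have hcard := G.card_edgeFinset_induce_compl_singleton x
  rw [edgeFinset_card, ← Nat.card_eq_fintype_card, htop, Nat.card_eq_fintype_card,
    ← edgeFinset_card, card_edgeFinset_top_eq_card_choose_two, Fintype.card_compl_set,
    card_edgeFinset_deleteIncidenceSet] at hcard
  simp only [Fintype.card_unique] at hcard
  rw [← Nat.card_coe_set_eq, Nat.card_eq_fintype_card, card_neighborSet_eq_degree,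
    Nat.card_eq_fintype_card, ← edgeFinset_card]
  have := G.degree_le_card_edgeFinset x
  omega

lemma exists_edgeSlide_ncard_neighborSet_add_one [Finite V] (hy : G.Adj x y) (hz : G.Adj x z)
    (hyz : y ≠ z) (hnyz : ¬G.Adj y z) :
    ∃ G', EdgeSlide G G' ∧ (G'.neighborSet x).ncard + 1 = (G.neighborSet x).ncard :=
  ⟨G.slideEdge y x z, edgeSlide_slideEdge hyz hy.symm hz hnyz, by
    rw [neighborSet_slideEdge_of_ne hy.ne hz.ne,
      Set.ncard_sdiff_singleton_add_one (s := G.neighborSet x) hy]⟩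

lemma exists_reflTransGen_neighborSet_eq [Finite V] {S A : Set V} (hS : G.IsClique S)
    (hxS : x ∉ S) (hNS : G.neighborSet x ⊆ S) (hAS : A ⊆ S)
    (hA : A.ncard = (G.neighborSet x).ncard) :
    ∃ G', ReflTransGen EdgeSlide G G' ∧ G'.neighborSet x = A ∧
      ∀ p q, p ≠ x → q ≠ x → (G'.Adj p q ↔ G.Adj p q) := by
  induction hk : (G.neighborSet x \ A).ncard generalizing G with
  | zero =>
    have hNA : G.neighborSet x ⊆ A := Set.sdiff_eq_empty.1 ((Set.ncard_eq_zero).1 hk)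
    exact ⟨G, .refl, Set.eq_of_subset_of_ncard_le hNA hA.le, fun _ _ _ _ => Iff.rfl⟩
  | succ k ih =>
    obtain ⟨y, hyN, hyA⟩ : (G.neighborSet x \ A).Nonempty :=
      Set.nonempty_of_ncard_ne_zero (by omega)
    obtain ⟨t, htA, htN⟩ : (A \ G.neighborSet x).Nonempty := by
      refine Set.sdiff_nonempty.2 fun hAN => hyA ?_
      exact Set.eq_of_subset_of_ncard_le hAN hA.ge ▸ hyN
    have hxt : x ≠ t := fun h => hxS (h ▸ hAS htA)
    have hyt : G.Adj y t := hS (hNS hyN) (hAS htA) fun h => hyA (h ▸ htA)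
    have hN₁ := neighborSet_slideEdge_self (z := t) hyN hxt
    have hadj₁ : ∀ p q, p ≠ x → q ≠ x → ((G.slideEdge x y t).Adj p q ↔ G.Adj p q) :=
      fun _ _ => slideEdge_adj_of_ne
    have hS₁ : (G.slideEdge x y t).IsClique S := fun a ha b hb hab =>
      (hadj₁ a b (ne_of_mem_of_not_mem ha hxS) (ne_of_mem_of_not_mem hb hxS)).2 (hS ha hb hab)
    have hNS₁ : (G.slideEdge x y t).neighborSet x ⊆ S := by
      rw [hN₁]
      exact Set.insert_subset (hAS htA) (Set.sdiff_subset.trans hNS)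
    have hA₁ : A.ncard = ((G.slideEdge x y t).neighborSet x).ncard := by
      rw [hN₁, Set.ncard_insert_of_notMem fun h => htN h.1,
        Set.ncard_sdiff_singleton_add_one hyN, hA]
    have hk₁ : ((G.slideEdge x y t).neighborSet x \ A).ncard = k := by
      rw [hN₁, Set.insert_sdiff_of_mem _ htA, Set.sdiff_sdiff_comm,
        ← Nat.add_right_cancel_iff (n := 1),
        Set.ncard_sdiff_singleton_add_one (s := G.neighborSet x \ A) ⟨hyN, hyA⟩, hk]
    obtain ⟨G', hG', hN', hadj'⟩ := ih hS₁ hNS₁ hA₁ hk₁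
    exact ⟨G', .head (edgeSlide_slideEdge hxt hyN hyt htN) hG', hN',
      fun p q hp hq => (hadj' p q hp hq).trans (hadj₁ p q hp hq)⟩

lemma exists_reflTransGen_ncard_neighborSet_add_one_of_isClique [Finite V] (hc : G.Connected)
    (hd : 2 ≤ (G.neighborSet x).ncard) (hN : G.IsClique (G.neighborSet x))
    (hfull : ¬G.IsClique {x}ᶜ) :
    ∃ G', ReflTransGen EdgeSlide G G' ∧
      (G'.neighborSet x).ncard + 1 = (G.neighborSet x).ncard := by
  obtain ⟨S, hNS, hS, hxS, hmax⟩ :=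
    exists_maximal_isClique_superset hN G.notMem_neighborSet_self
  obtain ⟨v, hvx, hvS⟩ : ∃ v, v ≠ x ∧ v ∉ S := by
    by_contra! h
    exact hfull (hS.subset fun v hv => h v hv)
  obtain ⟨s, hsS, u, huS, hux, hsu⟩ := hc.exists_adj_of_neighborSet_subset hNS hvS hvx
  obtain ⟨s', hs'S, hs'u, hus'⟩ := hmax u huS hux
  have hss' : s ≠ s' := by
    rintro rfl
    exact hus' hsu.symm
  obtain ⟨A, hsA, hAS, hA⟩ := Set.exists_subsuperset_card_eq
    (Set.insert_subset hsS (Set.singleton_subset_iff.2 hs'S))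
    (by rwa [Set.ncard_pair hss']) (Set.ncard_le_ncard hNS)
  obtain ⟨G₁, hG₁, hN₁, hadj₁⟩ := exists_reflTransGen_neighborSet_eq hS hxS hNS hAS hA
  have hsx : s ≠ x := ne_of_mem_of_not_mem hsS hxS
  have hs'x : s' ≠ x := ne_of_mem_of_not_mem hs'S hxS
  have hxs₁ : s ∈ G₁.neighborSet x := hN₁ ▸ hsA (Set.mem_insert s {s'})
  have hsu₁ : G₁.Adj s u := (hadj₁ s u hsx hux).2 hsu
  have hxu₁ : ¬G₁.Adj x u := fun h => huS (hAS (hN₁ ▸ h))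
  have hN₂ : (G₁.slideEdge x s u).neighborSet x = insert u (A \ {s}) := by
    rw [neighborSet_slideEdge_self hxs₁ hux.symm, hN₁]
  have hxs'₂ : s' ∈ (G₁.slideEdge x s u).neighborSet x :=
    hN₂ ▸ Set.mem_insert_of_mem u ⟨hsA (Set.mem_insert_of_mem s rfl), hss'.symm⟩
  have hxu₂ : u ∈ (G₁.slideEdge x s u).neighborSet x := hN₂ ▸ Set.mem_insert u _
  have hs'u₂ : ¬(G₁.slideEdge x s u).Adj s' u := by
    rw [slideEdge_adj_of_ne hs'x hux, hadj₁ s' u hs'x hux]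
    exact fun h => hus' h.symm
  obtain ⟨G₃, hG₃, hN₃⟩ := exists_edgeSlide_ncard_neighborSet_add_one hxs'₂ hxu₂ hs'u hs'u₂
  refine ⟨G₃, (hG₁.tail (edgeSlide_slideEdge hux.symm hxs₁ hsu₁ hxu₁)).tail hG₃, ?_⟩
  rw [hN₃, hN₂, Set.ncard_insert_of_notMem fun h => huS (hAS h.1),
    Set.ncard_sdiff_singleton_add_one (hsA (Set.mem_insert s {s'})), hA]

lemma exists_reflTransGen_ncard_neighborSet_add_one [Finite V] (hc : G.Connected)
    (hd : 2 ≤ (G.neighborSet x).ncard) (hfull : ¬G.IsClique {x}ᶜ) :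
    ∃ G', ReflTransGen EdgeSlide G G' ∧
      (G'.neighborSet x).ncard + 1 = (G.neighborSet x).ncard := by
  by_cases hN : G.IsClique (G.neighborSet x)
  · exact exists_reflTransGen_ncard_neighborSet_add_one_of_isClique hc hd hN hfull
  · obtain ⟨y, hy, z, hz, hyz, hnyz⟩ :
        ∃ y ∈ G.neighborSet x, ∃ z ∈ G.neighborSet x, y ≠ z ∧ ¬G.Adj y z := by
      simpa [IsClique, Set.Pairwise] using hN
    obtain ⟨G', hG', hdeg⟩ := exists_edgeSlide_ncard_neighborSet_add_one hy hz hyz hnyz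
    exact ⟨G', .single hG', hdeg⟩

end SimpleGraph

/-- A connected graph on `n ≥ 2` vertices with at most `(n-1)(n-2)/2 + 1` edges can be
slid into a connected graph in which a chosen vertex `x` has degree `1`, and deleting `x`
together with its single incident edge leaves a connected graph. -/
theorem slide_to_pendant_vertex {V : Type*} [Fintype V] (S : SimpleGraph V)
    (hn : 2 ≤ Fintype.card V) (hc : S.Connected) (x : V)
    (hf : Nat.card S.edgeSet ≤ (Fintype.card V - 1) * (Fintype.card V - 2) / 2 + 1) :
    ∃ G' : SimpleGraph V, Relation.ReflTransGen EdgeSlide S G' ∧ G'.Connected ∧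
      (G'.neighborSet x).ncard = 1 ∧ (G'.induce {v | v ≠ x}).Connected := by
  classical
  have : Nontrivial V := Fintype.one_lt_card_iff_nontrivial.1 hn
  induction hd : (S.neighborSet x).ncard using Nat.strong_induction_on generalizing S with
  | _ d ih =>
    have hpos : 0 < d :=
      hd ▸ (Set.ncard_pos).2 ((S.neighborSet_nonempty).2 (hc.preconnected.not_isIsolated x))
    obtain rfl | hd2 : d = 1 ∨ 2 ≤ d := by omega
    · refine ⟨S, .refl, hc, hd, hc.induce_compl_singleton_of_degree_eq_one ?_⟩
      rwa [← card_neighborSet_eq_degree, ← Nat.card_eq_fintype_card, Nat.card_coe_set_eq]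
    have hS : ¬S.IsClique {x}ᶜ := fun h => by
      have hchoose : (Fintype.card V - 1).choose 2 =
          (Fintype.card V - 1) * (Fintype.card V - 2) / 2 := Nat.choose_two_right _
      have := h.choose_two_add_ncard_neighborSet_le
      omega
    obtain ⟨G, hSG, hG⟩ := exists_reflTransGen_ncard_neighborSet_add_one hc (hd ▸ hd2) hS
    obtain ⟨G', hGG', hG'⟩ := ih _ (by omega) G (EdgeSlide.connected_of_reflTransGen hSG hc)
      (by rwa [EdgeSlide.natCard_edgeSet_of_reflTransGen hSG]) rfl
    exact ⟨G', hSG.trans hGG', hG'⟩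
end
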